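/- arXiv:2408.01073 — 2 statements merged into one kernel-verified Lean document; each statement's English description precedes it below -/
import Mathlib

section
/- Let 0 < λ < 1, 0 < α < 1, δ₀ > 0, B > 0, and let ω : (0,1] → [0,∞) be nondecreasing with ∫₀¹ ω(s)/s ds < ∞. Let A be any real number with A ≥ (4B/δ₀)·( ω(1) + (1−λ)^{-1} ∫₀¹ ω(s)/s ds ). Define the sequence (T_k) by T₀ = 1 and T_k = max{ λ^α T_{k−1}, 16 ω(λ^k) B/(A δ₀) } for k ≥ 1. Then for every k ≥ 0, Σ_{i=0}^{k} T_i ≤ (4 + λ^α)/(1 − λ^α) + 1; in particular the series Σ_{k=0}^{∞} T_k converges. -/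
/-!
Cut `(0, 1]` into the blocks `(λ^{i+1}, λ^i]`. On the `i`-th block `ω(s)/s ≥ ω(λ^{i+1})/λ^i`, so
`(1 - λ) Σ_{i<m} ω(λ^{i+1}) ≤ ∫₀¹ ω(s)/s ds`, and the choice of `A` makes the forcing terms
`16 ω(λ^k) B/(A δ₀)` sum to at most `4`. Since `T_{k+1} ≤ λ^α T_k + 16 ω(λ^{k+1}) B/(A δ₀)`, each
partial sum `S` of `Σ T_k` satisfies `S ≤ 1 + λ^α S + 4`, whence `S ≤ 5/(1 - λ^α)`.
-/

open MeasureTheory Set Finset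

theorem pow_mem_Ioc_zero_one {q : ℝ} (hq0 : 0 < q) (hq1 : q ≤ 1) (n : ℕ) :
    q ^ n ∈ Ioc (0 : ℝ) 1 :=
  ⟨pow_pos hq0 n, pow_le_one₀ hq0.le hq1⟩

section Dini

variable {ω : ℝ → ℝ}

theorem mul_one_sub_le_setIntegral_Ioc_div {b q : ℝ} (hb : 0 < b) (hq0 : 0 < q) (hq1 : q ≤ 1)
    (hω : MonotoneOn ω (Icc (q * b) b)) (hωnn : 0 ≤ ω (q * b))
    (hint : IntegrableOn (fun s => ω s / s) (Ioc (q * b) b)) :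
    ω (q * b) * (1 - q) ≤ ∫ s in Ioc (q * b) b, ω s / s := by
  have hqb : q * b ≤ b := mul_le_of_le_one_left hb.le hq1
  calc ω (q * b) * (1 - q) = ∫ _ in Ioc (q * b) b, ω (q * b) / b := by
        rw [setIntegral_const, Real.volume_real_Ioc_of_le hqb, smul_eq_mul]
        field_simp
    _ ≤ ∫ s in Ioc (q * b) b, ω s / s := by
        refine setIntegral_mono_on (integrableOn_const measure_Ioc_lt_top.ne) hint
          measurableSet_Ioc fun x hx => ?_
        have hωx : ω (q * b) ≤ ω x :=
          hω ⟨le_rfl, hqb⟩ (Ioc_subset_Icc_self hx) hx.1.le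
        exact div_le_div₀ (hωnn.trans hωx) hωx ((mul_pos hq0 hb).trans hx.1) hx.2

variable (hω : MonotoneOn ω (Ioc 0 1)) (hωnn : ∀ s ∈ Ioc (0 : ℝ) 1, 0 ≤ ω s)
  (hint : IntegrableOn (fun s => ω s / s) (Ioc 0 1))
include hω hωnn hint

theorem one_sub_mul_sum_le_setIntegral_Ioc_pow {q : ℝ} (hq0 : 0 < q) (hq1 : q ≤ 1) (m : ℕ) :
    (1 - q) * ∑ i ∈ range m, ω (q ^ (i + 1)) ≤ ∫ s in Ioc (q ^ m) 1, ω s / s := by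
  induction m with
  | zero => simp
  | succ m ih =>
    have hpow_mem := pow_mem_Ioc_zero_one hq0 hq1
    have hsucc : q ^ (m + 1) = q * q ^ m := pow_succ' q m
    have hblock : Ioc (q ^ (m + 1)) (q ^ m) ⊆ Ioc 0 1 :=
      Ioc_subset_Ioc (hpow_mem (m + 1)).1.le (hpow_mem m).2
    have htail : Ioc (q ^ m) 1 ⊆ Ioc 0 1 := Ioc_subset_Ioc (hpow_mem m).1.le le_rfl
    have hsplit : ∫ s in Ioc (q ^ (m + 1)) 1, ω s / s
        = (∫ s in Ioc (q ^ (m + 1)) (q ^ m), ω s / s) + ∫ s in Ioc (q ^ m) 1, ω s / s := by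
      rw [← Ioc_union_Ioc_eq_Ioc (pow_le_pow_of_le_one hq0.le hq1 m.le_succ) (hpow_mem m).2]
      exact setIntegral_union (Ioc_disjoint_Ioc_of_le le_rfl) measurableSet_Ioc
        (hint.mono_set hblock) (hint.mono_set htail)
    have hstep : ω (q ^ (m + 1)) * (1 - q) ≤ ∫ s in Ioc (q ^ (m + 1)) (q ^ m), ω s / s := by
      rw [hsucc] at hblock ⊢
      refine mul_one_sub_le_setIntegral_Ioc_div (hpow_mem m).1 hq0 hq1
        (hω.mono fun x hx => ?_) (hωnn _ (hsucc ▸ hpow_mem (m + 1))) (hint.mono_set hblock)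
      exact ⟨(hsucc ▸ hpow_mem (m + 1)).1.trans_le hx.1, hx.2.trans (hpow_mem m).2⟩
    rw [sum_range_succ, hsplit]
    linarith

theorem sum_pow_le_inv_one_sub_mul_setIntegral {q : ℝ} (hq0 : 0 < q) (hq1 : q < 1) (m : ℕ) :
    ∑ i ∈ range m, ω (q ^ (i + 1)) ≤ (1 - q)⁻¹ * ∫ s in Ioc (0 : ℝ) 1, ω s / s := by
  have htail : ∫ s in Ioc (q ^ m) 1, ω s / s ≤ ∫ s in Ioc (0 : ℝ) 1, ω s / s := by
    refine setIntegral_mono_set hint ?_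
      (Ioc_subset_Ioc (pow_pos hq0 m).le le_rfl).eventuallyLE
    filter_upwards [ae_restrict_mem measurableSet_Ioc] with x hx
    exact div_nonneg (hωnn x hx) hx.1.le
  rw [inv_mul_eq_div, le_div_iff₀ (sub_pos.2 hq1), mul_comm]
  exact (one_sub_mul_sum_le_setIntegral_Ioc_pow hω hωnn hint hq0 hq1.le m).trans htail

end Dini

theorem sum_range_succ_le_of_le_mul_add {u e : ℕ → ℝ} {r E : ℝ} (hu0 : 0 ≤ u 0) (hr0 : 0 ≤ r)
    (hr1 : r < 1) (hrec : ∀ k, u (k + 1) ≤ r * u k + e k) (he : ∀ m, ∑ i ∈ range m, e i ≤ E)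
    (k : ℕ) :
    ∑ i ∈ range (k + 1), u i ≤ (u 0 + E) / (1 - r) := by
  have hden : 0 < 1 - r := sub_pos.2 hr1
  induction k with
  | zero =>
    rw [sum_range_one, le_div_iff₀ hden]
    linarith [he 0, sum_range_zero e, mul_nonneg hr0 hu0]
  | succ k ih =>
    have hshift : ∑ i ∈ range (k + 1), u (i + 1)
        ≤ r * ∑ i ∈ range (k + 1), u i + ∑ i ∈ range (k + 1), e i := by
      rw [mul_sum, ← sum_add_distrib]
      exact sum_le_sum fun i _ => hrec i
    have hfix : u 0 + E + r * ((u 0 + E) / (1 - r)) = (u 0 + E) / (1 - r) := by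
      field_simp
      ring
    rw [sum_range_succ']
    linarith [he (k + 1), mul_le_mul_of_nonneg_left ih hr0]

theorem mul_sum_pow_le_of_mul_add_le {lam c A : ℝ} {ω : ℝ → ℝ} (hlam0 : 0 < lam)
    (hlam1 : lam < 1) (hc : 0 ≤ c) (hωnn : ∀ s ∈ Ioc (0 : ℝ) 1, 0 ≤ ω s)
    (hωmono : MonotoneOn ω (Ioc (0 : ℝ) 1))
    (hdini : IntegrableOn (fun s : ℝ => ω s / s) (Ioc 0 1))
    (hA : c * (ω 1 + (1 - lam)⁻¹ * ∫ s in Ioc (0 : ℝ) 1, ω s / s) ≤ A) (m : ℕ) :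
    c * ∑ i ∈ range m, ω (lam ^ (i + 1)) ≤ A := by
  refine le_trans ?_ hA
  gcongr
  exact (sum_pow_le_inv_one_sub_mul_setIntegral hωmono hωnn hdini hlam0 hlam1 m).trans
    (le_add_of_nonneg_left (hωnn 1 ⟨one_pos, le_rfl⟩))

/-- At `A = 0` every term is `x / 0 = 0`. -/
theorem sum_mul_div_mul_le_four {ι : Type*} {s : Finset ι} {f : ι → ℝ} {δ₀ B A : ℝ}
    (hA0 : 0 ≤ A) (h : 4 * B / δ₀ * ∑ i ∈ s, f i ≤ A) :
    ∑ i ∈ s, 16 * f i * B / (A * δ₀) ≤ 4 := by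
  calc ∑ i ∈ s, 16 * f i * B / (A * δ₀) = 4 * (4 * B / δ₀ * ∑ i ∈ s, f i) / A := by
        rw [mul_sum, mul_sum, sum_div]
        refine sum_congr rfl fun i _ => ?_
        ring
    _ ≤ 4 * 1 := by rw [mul_div_assoc]; gcongr; exact div_le_one_of_le₀ h hA0
    _ = 4 := mul_one 4

theorem statement11_general (lam α δ₀ B A : ℝ) (hlam0 : 0 < lam) (hlam1 : lam < 1)
    (hα0 : 0 < α) (hδ₀ : 0 < δ₀) (hB : 0 < B)
    (ω : ℝ → ℝ) (hωnn : ∀ s ∈ Ioc (0 : ℝ) 1, 0 ≤ ω s)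
    (hωmono : MonotoneOn ω (Ioc (0 : ℝ) 1))
    (hdini : IntegrableOn (fun s : ℝ => ω s / s) (Ioc 0 1))
    (hA : 4 * B / δ₀ * (ω 1 + (1 - lam)⁻¹ * ∫ s in Ioc (0 : ℝ) 1, ω s / s) ≤ A)
    (T : ℕ → ℝ) (hT0 : T 0 = 1)
    (hTk : ∀ k : ℕ,
      T (k + 1) = max (lam ^ α * T k) (16 * ω (lam ^ (k + 1)) * B / (A * δ₀))) :
    (∀ k : ℕ, ∑ i ∈ Finset.range (k + 1), T i ≤ (4 + lam ^ α) / (1 - lam ^ α) + 1) ∧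
    Summable T := by
  set r := lam ^ α
  set e : ℕ → ℝ := fun k => 16 * ω (lam ^ (k + 1)) * B / (A * δ₀)
  have hr0 : 0 < r := Real.rpow_pos_of_pos hlam0 α
  have hr1 : r < 1 := Real.rpow_lt_one hlam0.le hlam1 hα0
  have hSA := mul_sum_pow_le_of_mul_add_le hlam0 hlam1 (by positivity) hωnn hωmono hdini hA
  have hA0 : 0 ≤ A := by simpa using hSA 0
  have he0 : ∀ k, 0 ≤ e k := fun k =>
    div_nonneg (by have := hωnn _ (pow_mem_Ioc_zero_one hlam0 hlam1.le (k + 1)); positivity)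
      (by positivity)
  have hTnn : ∀ k, 0 ≤ T k := by
    intro k
    induction k with
    | zero => exact hT0 ▸ zero_le_one
    | succ k ih => exact hTk k ▸ le_max_of_le_left (mul_nonneg hr0.le ih)
  have hrec : ∀ k, T (k + 1) ≤ r * T k + e k := fun k =>
    hTk k ▸ max_le_add_of_nonneg (mul_nonneg hr0.le (hTnn k)) (he0 k)
  have hpartial : ∀ k, ∑ i ∈ range (k + 1), T i ≤ (4 + r) / (1 - r) + 1 := by
    intro k
    have hval : (4 + r) / (1 - r) + 1 = (T 0 + 4) / (1 - r) := by
      rw [hT0]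
      field_simp [(sub_pos.2 hr1).ne']
      ring
    rw [hval]
    exact sum_range_succ_le_of_le_mul_add (hT0 ▸ zero_le_one) hr0.le hr1 hrec
      (fun m => sum_mul_div_mul_le_four hA0 (hSA m)) k
  refine ⟨hpartial, summable_of_sum_range_le (c := (4 + r) / (1 - r) + 1) hTnn fun n => ?_⟩
  exact (sum_range_succ T n ▸ le_add_of_nonneg_right (hTnn n)).trans (hpartial n)

/-- Step 3 of the proof of Theorem 1.4: the series `Σ T_k` converges.
With `T₀ = 1` and `T_k = max{λ^α T_{k-1}, 16 ω(λ^k) B/(A δ₀)}`, and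
`A ≥ (4B/δ₀)(ω(1) + (1-λ)⁻¹ ∫₀¹ ω(s)/s ds)`, every partial sum of `Σ T_k` is bounded by
`(4 + λ^α)/(1 - λ^α) + 1`; in particular the series converges. -/
theorem statement11 (lam α δ₀ B A : ℝ) (hlam0 : 0 < lam) (hlam1 : lam < 1)
    (hα0 : 0 < α) (hα1 : α < 1) (hδ₀ : 0 < δ₀) (hB : 0 < B)
    (ω : ℝ → ℝ) (hωnn : ∀ s ∈ Ioc (0 : ℝ) 1, 0 ≤ ω s)
    (hωmono : MonotoneOn ω (Ioc (0 : ℝ) 1))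
    (hdini : IntegrableOn (fun s : ℝ => ω s / s) (Ioc 0 1))
    (hA : 4 * B / δ₀ * (ω 1 + (1 - lam)⁻¹ * ∫ s in Ioc (0 : ℝ) 1, ω s / s) ≤ A)
    (T : ℕ → ℝ) (hT0 : T 0 = 1)
    (hTk : ∀ k : ℕ,
      T (k + 1) = max (lam ^ α * T k) (16 * ω (lam ^ (k + 1)) * B / (A * δ₀))) :
    (∀ k : ℕ, ∑ i ∈ Finset.range (k + 1), T i ≤ (4 + lam ^ α) / (1 - lam ^ α) + 1) ∧
    Summable T :=
  statement11_general lam α δ₀ B A hlam0 hlam1 hα0 hδ₀ hB ω hωnn hωmono hdini hA T hT0 hTk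
end

section
/- Let 0 < λ < 1, 0 < α < 1, δ₀ > 0, B > 0, A > 0, and let ω : (0,1] → [0,∞) be nondecreasing. Define T₀ = 1 and T_k = max{ λ^α T_{k−1}, 16 ω(λ^k) B/(A δ₀) } for k ≥ 1. Then for every k ≥ 0, T_k ≤ λ^{kα} + (16 B λ^{kα})/(A δ₀ λ^α (1−λ)) · ∫_{λ^k}^{1} ω(s) s^{−1−α} ds. -/
/-!
Unrolling `T_{k+1} ≤ λ^α T_k + β_{k+1}`, with `β_{k+1} = 16 ω(λ^{k+1}) B/(A δ₀)`, gives
`T_k ≤ λ^{kα}(1 + K I_k)` for `K = 16 B/(A δ₀ λ^α (1-λ))` and `I_k = ∫_{λ^k}^1 ω(s) s^{-1-α} ds`,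
as soon as every forcing term satisfies `β_{k+1} ≤ K λ^{(k+1)α} (I_{k+1} - I_k)`.
That bound holds because on the block `(λ^{k+1}, λ^k]` the integrand is at least
`ω(λ^{k+1}) λ^{-k(1+α)}` while the block has length `λ^k (1 - λ)`.
-/

open MeasureTheory Set

theorem le_pow_mul_one_add_of_le_mul_add {r K : ℝ} {T β I : ℕ → ℝ} (hr : 0 ≤ r)
    (hT0 : T 0 ≤ 1) (hI0 : I 0 = 0) (hstep : ∀ k, T (k + 1) ≤ r * T k + β k)
    (hβ : ∀ k, β k ≤ K * r ^ (k + 1) * (I (k + 1) - I k)) (k : ℕ) :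
    T k ≤ r ^ k * (1 + K * I k) := by
  induction k with
  | zero => simpa [hI0] using hT0
  | succ k ih =>
    calc T (k + 1) ≤ r * T k + β k := hstep k
      _ ≤ r * (r ^ k * (1 + K * I k)) + K * r ^ (k + 1) * (I (k + 1) - I k) :=
        add_le_add (mul_le_mul_of_nonneg_left ih hr) (hβ k)
      _ = r ^ (k + 1) * (1 + K * I (k + 1)) := by ring

theorem le_mul_add_of_eq_max {r : ℝ} {T β : ℕ → ℝ} (hr : 0 ≤ r) (hT0 : 0 ≤ T 0)
    (hβ : ∀ k, 0 ≤ β k) (hT : ∀ k, T (k + 1) = max (r * T k) (β k)) (k : ℕ) :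
    T (k + 1) ≤ r * T k + β k := by
  have hTnn : ∀ k, 0 ≤ T k := by
    intro k
    induction k with
    | zero => exact hT0
    | succ k ih => rw [hT k]; exact le_max_of_le_left (mul_nonneg hr ih)
  rw [hT k]
  exact max_le (le_add_of_nonneg_right (hβ k)) (le_add_of_nonneg_left (mul_nonneg hr (hTnn k)))

theorem MonotoneOn.integrableOn_mul_rpow_Icc {ω : ℝ → ℝ} {a b : ℝ}
    (hω : MonotoneOn ω (Icc a b)) (ha : 0 < a) (p : ℝ) :
    IntegrableOn (fun s => ω s * s ^ p) (Icc a b) :=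
  (hω.integrableOn_isCompact isCompact_Icc).mul_continuousOn
    (fun s hs => (Real.continuousAt_rpow_const s p
      (Or.inl (ha.trans_le hs.1).ne')).continuousWithinAt) isCompact_Icc

theorem sub_mul_le_setIntegral_Ioc_mul_rpow {ω : ℝ → ℝ} {a b p : ℝ}
    (hω : MonotoneOn ω (Icc a b)) (hωa : 0 ≤ ω a) (ha : 0 < a) (hab : a ≤ b) (hp : p ≤ 0) :
    (b - a) * (ω a * b ^ p) ≤ ∫ s in Ioc a b, ω s * s ^ p := by
  have hlow : ∀ s ∈ Ioc a b, ω a * b ^ p ≤ ω s * s ^ p := fun s hs =>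
    mul_le_mul (hω (left_mem_Icc.2 hab) (Ioc_subset_Icc_self hs) hs.1.le)
      (Real.rpow_le_rpow_of_nonpos (ha.trans hs.1) hs.2 hp)
      (Real.rpow_nonneg (ha.trans_le hab).le p)
      (hωa.trans (hω (left_mem_Icc.2 hab) (Ioc_subset_Icc_self hs) hs.1.le))
  have h := setIntegral_ge_of_const_le measurableSet_Ioc measure_Ioc_lt_top.ne hlow
    ((hω.integrableOn_mul_rpow_Icc ha p).mono_set Ioc_subset_Icc_self)
  rwa [Real.volume_real_Ioc_of_le hab, smul_eq_mul] at h

theorem setIntegral_Ioc_sub_setIntegral_Ioc {f : ℝ → ℝ} {a b c : ℝ} (hab : a ≤ b) (hbc : b ≤ c)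
    (hf : IntegrableOn f (Ioc a c)) :
    (∫ s in Ioc a c, f s) - ∫ s in Ioc b c, f s = ∫ s in Ioc a b, f s := by
  rw [← Ioc_union_Ioc_eq_Ioc hab hbc, setIntegral_union (Ioc_disjoint_Ioc_of_le le_rfl)
    measurableSet_Ioc (hf.mono_set (Ioc_subset_Ioc_right hbc))
    (hf.mono_set (Ioc_subset_Ioc_left hab)), add_sub_cancel_right]

theorem rpow_pow_succ_mul_sub_mul_rpow {lam : ℝ} (hlam : 0 < lam) (α : ℝ) (k : ℕ) :
    (lam ^ α) ^ (k + 1) * ((lam ^ k - lam ^ (k + 1)) * (lam ^ k) ^ (-1 - α)) =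
      lam ^ α * (1 - lam) := by
  rw [← Real.rpow_mul_natCast hlam.le, ← Real.rpow_natCast_mul hlam.le]
  have hpow : lam ^ (α * ↑(k + 1)) * lam ^ ((k : ℝ) * (-1 - α)) = lam ^ α * lam ^ (-(k : ℝ)) := by
    rw [← Real.rpow_add hlam, ← Real.rpow_add hlam]
    push_cast
    ring_nf
  rw [Real.rpow_neg hlam.le, Real.rpow_natCast] at hpow
  have hk : lam ^ k ≠ 0 := (pow_pos hlam k).ne'
  calc lam ^ (α * ↑(k + 1)) * ((lam ^ k - lam ^ (k + 1)) * lam ^ ((k : ℝ) * (-1 - α)))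
      = lam ^ (α * ↑(k + 1)) * lam ^ ((k : ℝ) * (-1 - α)) * (lam ^ k * (1 - lam)) := by ring
    _ = lam ^ α * (1 - lam) := by rw [hpow]; field_simp

theorem mul_le_rpow_pow_mul_setIntegral_Ioc_pow_sub {ω : ℝ → ℝ} {lam α : ℝ}
    (hωnn : ∀ s ∈ Ioc (0 : ℝ) 1, 0 ≤ ω s) (hωmono : MonotoneOn ω (Ioc (0 : ℝ) 1))
    (hlam0 : 0 < lam) (hlam1 : lam < 1) (hα : -1 ≤ α) (k : ℕ) :
    ω (lam ^ (k + 1)) * (lam ^ α * (1 - lam)) ≤ (lam ^ α) ^ (k + 1) *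
      ((∫ s in Ioc (lam ^ (k + 1)) 1, ω s * s ^ (-1 - α)) -
        ∫ s in Ioc (lam ^ k) 1, ω s * s ^ (-1 - α)) := by
  have hpow_pos : ∀ n : ℕ, 0 < lam ^ n := fun n => pow_pos hlam0 n
  have hpow_le : ∀ n : ℕ, lam ^ n ≤ 1 := fun n => pow_le_one₀ hlam0.le hlam1.le
  have hmonoIcc : ∀ b ≤ 1, MonotoneOn ω (Icc (lam ^ (k + 1)) b) := fun b hb =>
    hωmono.mono fun s hs => ⟨(hpow_pos _).trans_le hs.1, hs.2.trans hb⟩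
  have hsucc_le : lam ^ (k + 1) ≤ lam ^ k := pow_le_pow_of_le_one hlam0.le hlam1.le k.le_succ
  have hblock := sub_mul_le_setIntegral_Ioc_mul_rpow (hmonoIcc _ (hpow_le k))
    (hωnn _ ⟨hpow_pos _, hpow_le _⟩) (hpow_pos _) hsucc_le (by linarith : -1 - α ≤ 0)
  rw [← setIntegral_Ioc_sub_setIntegral_Ioc hsucc_le (hpow_le k)
    (((hmonoIcc 1 le_rfl).integrableOn_mul_rpow_Icc (hpow_pos _) _).mono_set
      Ioc_subset_Icc_self)] at hblock
  calc ω (lam ^ (k + 1)) * (lam ^ α * (1 - lam))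
      = ω (lam ^ (k + 1)) * ((lam ^ α) ^ (k + 1) *
          ((lam ^ k - lam ^ (k + 1)) * (lam ^ k) ^ (-1 - α))) := by
        rw [rpow_pow_succ_mul_sub_mul_rpow hlam0]
    _ = (lam ^ α) ^ (k + 1) *
          ((lam ^ k - lam ^ (k + 1)) * (ω (lam ^ (k + 1)) * (lam ^ k) ^ (-1 - α))) := by ring
    _ ≤ _ := mul_le_mul_of_nonneg_left hblock (pow_nonneg (Real.rpow_nonneg hlam0.le α) _)

theorem statement12_general (lam α δ₀ B A : ℝ) (hlam0 : 0 < lam) (hlam1 : lam < 1)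
    (hα0 : 0 < α) (hδ₀ : 0 < δ₀) (hB : 0 < B) (hA : 0 < A)
    (ω : ℝ → ℝ) (hωnn : ∀ s ∈ Ioc (0 : ℝ) 1, 0 ≤ ω s)
    (hωmono : MonotoneOn ω (Ioc (0 : ℝ) 1))
    (T : ℕ → ℝ) (hT0 : T 0 = 1)
    (hTk : ∀ k : ℕ,
      T (k + 1) = max (lam ^ α * T k) (16 * ω (lam ^ (k + 1)) * B / (A * δ₀))) :
    ∀ k : ℕ, T k ≤ lam ^ ((k : ℝ) * α) +
      16 * B * lam ^ ((k : ℝ) * α) / (A * δ₀ * lam ^ α * (1 - lam)) *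
        ∫ s in Ioc (lam ^ k) 1, ω s * s ^ (-1 - α) := by
  intro k
  set K := 16 * B / (A * δ₀ * lam ^ α * (1 - lam))
  set I : ℕ → ℝ := fun k => ∫ s in Ioc (lam ^ k) 1, ω s * s ^ (-1 - α) with hI
  have hr_pos : 0 < lam ^ α := Real.rpow_pos_of_pos hlam0 α
  have hlam_lt : 0 < 1 - lam := by linarith
  have hωpow : ∀ n : ℕ, 0 ≤ ω (lam ^ n) :=
    fun n => hωnn _ ⟨pow_pos hlam0 n, pow_le_one₀ hlam0.le hlam1.le⟩
  have hstep := le_mul_add_of_eq_max hr_pos.le (hT0 ▸ zero_le_one)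
    (fun n => by have := hωpow (n + 1); positivity) hTk
  have hforcing : ∀ n : ℕ, 16 * ω (lam ^ (n + 1)) * B / (A * δ₀) ≤
      K * (lam ^ α) ^ (n + 1) * (I (n + 1) - I n) := fun n =>
    calc 16 * ω (lam ^ (n + 1)) * B / (A * δ₀)
        = K * (ω (lam ^ (n + 1)) * (lam ^ α * (1 - lam))) := by
          simp only [K]; field_simp
      _ ≤ K * ((lam ^ α) ^ (n + 1) * (I (n + 1) - I n)) :=
        mul_le_mul_of_nonneg_left (mul_le_rpow_pow_mul_setIntegral_Ioc_pow_sub hωnn hωmono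
          hlam0 hlam1 (by linarith : -1 ≤ α) n) (by positivity)
      _ = K * (lam ^ α) ^ (n + 1) * (I (n + 1) - I n) := by ring
  have hmain := le_pow_mul_one_add_of_le_mul_add hr_pos.le hT0.le (by simp [hI]) hstep hforcing k
  rw [mul_comm (k : ℝ), Real.rpow_mul_natCast hlam0.le]
  calc T k ≤ (lam ^ α) ^ k * (1 + K * I k) := hmain
    _ = _ := by ring

/-- Step 4 of the proof of Theorem 1.4: decay of `T_k`.
With `T₀ = 1` and `T_k = max{λ^α T_{k-1}, 16 ω(λ^k) B/(A δ₀)}`, one has for every `k`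
`T_k ≤ λ^{kα} + (16 B λ^{kα})/(A δ₀ λ^α (1-λ)) ∫_{λ^k}^1 ω(s) s^{-1-α} ds`. -/
theorem statement12 (lam α δ₀ B A : ℝ) (hlam0 : 0 < lam) (hlam1 : lam < 1)
    (hα0 : 0 < α) (hα1 : α < 1) (hδ₀ : 0 < δ₀) (hB : 0 < B) (hA : 0 < A)
    (ω : ℝ → ℝ) (hωnn : ∀ s ∈ Ioc (0 : ℝ) 1, 0 ≤ ω s)
    (hωmono : MonotoneOn ω (Ioc (0 : ℝ) 1))
    (T : ℕ → ℝ) (hT0 : T 0 = 1)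
    (hTk : ∀ k : ℕ,
      T (k + 1) = max (lam ^ α * T k) (16 * ω (lam ^ (k + 1)) * B / (A * δ₀))) :
    ∀ k : ℕ, T k ≤ lam ^ ((k : ℝ) * α) +
      16 * B * lam ^ ((k : ℝ) * α) / (A * δ₀ * lam ^ α * (1 - lam)) *
        ∫ s in Ioc (lam ^ k) 1, ω s * s ^ (-1 - α) :=
  statement12_general lam α δ₀ B A hlam0 hlam1 hα0 hδ₀ hB hA ω hωnn hωmono T hT0 hTk
end
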